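/- arXiv:2507.01133 — 6 statements merged into one kernel-verified Lean document; each statement's English description precedes it below -/
import Mathlib

section
/- Suppose T is a tree of height ω₁ and F : [T] → 2^{ω₁} is a surjective continuous function between the spaces of cofinal branches with the cone topologies. Define H(x) = ⋂{F(b) : b ∈ [T], x ∈ b} for x ∈ T (the largest common initial segment of F(b) over all branches b through x). Then: (1) x <_T y implies H(x) ⊆ H(y); (2) for every s ∈ 2^{<ω₁} there exists x ∈ T with s ⊆ H(x); (3) for every cofinal branch b of T and every ζ < ω₁ there exists y ∈ b with ζ ≤ dom(H(y)). -/
noncomputable section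

/-- The ordinal ω₁. -/
def w1 : Ordinal.{0} := (Cardinal.aleph 1).ord

/-- A binary sequence with ordinal domain: an element of `2^{≤Ord}`.
Values beyond the domain are normalized to `false`. -/
structure BSeq where
  dom : Ordinal.{0}
  val : Ordinal.{0} → Bool
  norm : ∀ i, dom ≤ i → val i = false

namespace BSeq

/-- `s.Ext t` means `s` is an initial segment of `t` (i.e. `s ⊆ t` as functions). -/
def Ext (s t : BSeq) : Prop := s.dom ≤ t.dom ∧ ∀ i < s.dom, s.val i = t.val i

/-- The empty sequence. -/
def nil : BSeq := ⟨0, fun _ => false, fun _ _ => rfl⟩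

/-- Restriction of a sequence to (its intersection with) an ordinal `α`. -/
def restrict (s : BSeq) (α : Ordinal) : BSeq where
  dom := min α s.dom
  val := fun i => if i < α ∧ i < s.dom then s.val i else false
  norm := by
    intro i hi
    have hc : ¬(i < α ∧ i < s.dom) := by
      rintro ⟨h1, h2⟩
      rcases min_le_iff.mp hi with h | h
      · exact absurd h1 (not_lt.mpr h)
      · exact absurd h2 (not_lt.mpr h)
    simp [hc]

end BSeq

/-- `b` is a cofinal branch of the tree `(T, <)` with height function `ht`:
a downward-closed chain meeting every level below ω₁. -/
def IsBranch {T : Type} [PartialOrder T] (ht : T → Ordinal) (b : Set T) : Prop :=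
  IsChain (· ≤ ·) b ∧ (∀ x ∈ b, ∀ y, y < x → y ∈ b) ∧ ∀ α < w1, ∃ x ∈ b, ht x = α

/-- `(T, <)` together with the height function `ht` is a set-theoretic tree of
height ω₁: heights are countable ordinals, the strict order raises height, the
predecessors of any node are linearly ordered with exactly one on each lower
level, and every level below ω₁ is nonempty. -/
structure IsTreeW1 {T : Type} [PartialOrder T] (ht : T → Ordinal) : Prop where
  ht_lt : ∀ x : T, ht x < w1
  lt_ht : ∀ {x y : T}, x < y → ht x < ht y
  pred_linear : ∀ {x y z : T}, x < z → y < z → x ≤ y ∨ y ≤ x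
  pred_exists : ∀ z : T, ∀ α < ht z, ∃ x : T, x < z ∧ ht x = α
  height_w1 : ∀ α < w1, ∃ x : T, ht x = α

/-- The space of cofinal branches of the tree. -/
abbrev Branches {T : Type} [PartialOrder T] (ht : T → Ordinal) : Type :=
  {b : Set T // IsBranch ht b}

/-- The cone topology on the space of cofinal branches. -/
def coneTop {T : Type} [PartialOrder T] (ht : T → Ordinal) :
    TopologicalSpace (Branches ht) :=
  TopologicalSpace.generateFrom
    {S : Set (Branches ht) | ∃ x : T, S = {b : Branches ht | x ∈ b.1}}

/-- The space `2^{ω₁}`. -/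
abbrev FullSeq : Type 1 := {g : BSeq // g.dom = w1}

/-- The cone topology on `2^{ω₁}`: basic open sets are determined by elements of `2^{<ω₁}`. -/
def seqTop : TopologicalSpace FullSeq :=
  TopologicalSpace.generateFrom
    {S : Set FullSeq | ∃ s : BSeq, s.dom < w1 ∧ S = {g : FullSeq | s.Ext g.1}}

/-- if `F : [T] → 2^{ω₁}` is a continuous surjection between the
branch space of a tree of height ω₁ and `2^{ω₁}` (cone topologies), and
`H(x) = ⋂ {F(b) : b ∈ [T], x ∈ b}` (the largest common initial segment), then
`H` is monotone, every `s ∈ 2^{<ω₁}` is extended by some `H(x)`, and along any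
cofinal branch the domains of the `H`-values are unbounded in ω₁. -/
theorem stmt2 {T : Type} [PartialOrder T] (ht : T → Ordinal) (htree : IsTreeW1 ht)
    (F : Branches ht → FullSeq)
    (hcont : @Continuous _ _ (coneTop ht) seqTop F)
    (hsurj : Function.Surjective F)
    (H : T → BSeq)
    (hH : ∀ x : T,
      (∀ b : Branches ht, x ∈ b.1 → (H x).Ext (F b).1) ∧
      (∀ s : BSeq, (∀ b : Branches ht, x ∈ b.1 → s.Ext (F b).1) → s.Ext (H x))) :
    (∀ x y : T, x < y → (H x).Ext (H y)) ∧
    (∀ s : BSeq, s.dom < w1 → ∃ x : T, s.Ext (H x)) ∧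
    (∀ b : Branches ht, ∀ ζ < w1, ∃ y ∈ b.1, ζ ≤ (H y).dom) := by
  have hw : (0:Ordinal) < w1 := by
    calc (0:Ordinal) < Ordinal.omega0 := Ordinal.omega0_pos
      _ ≤ (Cardinal.aleph 1).ord := by
          rw [← Cardinal.ord_aleph0]
          exact Cardinal.ord_le_ord.mpr (Cardinal.aleph0_le_aleph 1)
  have hdc : ∀ (b : Branches ht) (x y : T), x ≤ y → y ∈ b.1 → x ∈ b.1 := by
    intro b x y hxy hy
    rcases lt_or_eq_of_le hxy with h | h
    · exact b.2.2.1 y hy x h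
    · exact h ▸ hy
  have key : ∀ U : Set (Branches ht), TopologicalSpace.GenerateOpen
      {S : Set (Branches ht) | ∃ x : T, S = {b : Branches ht | x ∈ b.1}} U →
      ∀ b ∈ U, ∃ x ∈ b.1, ∀ b' : Branches ht, x ∈ b'.1 → b' ∈ U := by
    intro U hU
    induction hU with
    | basic S hS =>
        obtain ⟨x, rfl⟩ := hS
        exact fun b hb => ⟨x, hb, fun b' h => h⟩
    | univ =>
        intro b _
        obtain ⟨x, hx, -⟩ := b.2.2.2 0 hw
        exact ⟨x, hx, fun _ _ => trivial⟩
    | inter U V hU hV ihU ihV =>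
        intro b hb
        obtain ⟨x, hxb, hx⟩ := ihU b hb.1
        obtain ⟨y, hyb, hy⟩ := ihV b hb.2
        have hcomp : x ≤ y ∨ y ≤ x := by
          rcases eq_or_ne x y with h | h
          · exact Or.inl h.le
          · exact b.2.1 hxb hyb h
        rcases hcomp with h | h
        · exact ⟨y, hyb, fun b' hb' => ⟨hx b' (hdc b' x y h hb'), hy b' hb'⟩⟩
        · exact ⟨x, hxb, fun b' hb' => ⟨hx b' hb', hy b' (hdc b' y x h hb')⟩⟩
    | sUnion S hS ih =>
        intro b hb
        obtain ⟨V, hVS, hbV⟩ := hb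
        obtain ⟨x, hx, h⟩ := ih V hVS b hbV
        exact ⟨x, hx, fun b' h' => ⟨V, hVS, h b' h'⟩⟩
  have force : ∀ (s : BSeq), s.dom < w1 → ∀ b : Branches ht, s.Ext (F b).1 →
      ∃ x ∈ b.1, s.Ext (H x) := by
    intro s hs b hsb
    have hopen : seqTop.IsOpen {g : FullSeq | s.Ext g.1} :=
      TopologicalSpace.GenerateOpen.basic _ ⟨s, hs, rfl⟩
    have hpre : (coneTop ht).IsOpen (F ⁻¹' {g : FullSeq | s.Ext g.1}) :=
      @Continuous.isOpen_preimage _ _ (coneTop ht) seqTop F hcont _ hopen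
    obtain ⟨x, hxb, hx⟩ := key _ hpre b hsb
    exact ⟨x, hxb, (hH x).2 s (fun b' hb' => hx b' hb')⟩
  refine ⟨?_, ?_, ?_⟩
  · intro x y hxy
    exact (hH y).2 (H x) (fun b hb => (hH x).1 b (hdc b x y hxy.le hb))
  · intro s hs
    have hnorm : ∀ i, w1 ≤ i → (if i < s.dom then s.val i else false) = false := by
      intro i hi
      have : ¬ i < s.dom := not_lt.mpr (le_of_lt (lt_of_lt_of_le hs hi))
      simp [this]
    set g : FullSeq := ⟨⟨w1, fun i => if i < s.dom then s.val i else false, hnorm⟩, rfl⟩ with hg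
    obtain ⟨b, hb⟩ := hsurj g
    have hsb : s.Ext (F b).1 := by
      rw [hb, hg]
      exact ⟨hs.le, fun i hi => by simp [hi]⟩
    obtain ⟨x, -, hx⟩ := force s hs b hsb
    exact ⟨x, hx⟩
  · intro b ζ hζ
    set s : BSeq := (F b).1.restrict ζ with hsdef
    have hdomFb : (F b).1.dom = w1 := (F b).2
    have hsdom : s.dom = ζ := by
      simp [hsdef, BSeq.restrict, hdomFb, min_eq_left hζ.le]
    have hsFb : s.Ext (F b).1 := by
      constructor
      · rw [hsdom, hdomFb]; exact hζ.le
      · intro i hi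
        rw [hsdom] at hi
        have hi2 : i < (F b).1.dom := by rw [hdomFb]; exact lt_trans hi hζ
        simp [hsdef, BSeq.restrict, hi, hi2]
    obtain ⟨y, hyb, hy⟩ := force s (hsdom ▸ hζ) b hsFb
    exact ⟨y, hyb, hsdom ▸ hy.1⟩
end
end

section
/- Suppose T is an ω₁-tree (a tree of height ω₁ with all levels countable) and there exists a function H : T → 2^{≤ω₁} satisfying: (1) x <_T y implies H(x) ⊆ H(y); (2) for all s ∈ 2^{<ω₁} there exists x ∈ T with s ⊆ H(x); (3) for every cofinal branch b of T and every ζ < ω₁ there exists y ∈ b with ζ ≤ dom(H(y)). Then T contains an Aronszajn subtree, i.e., an uncountable downward-closed subtree with no cofinal branch. -/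
noncomputable section

/-! ### Auxiliary lemmas -/

lemma omega0_lt_w1 : Ordinal.omega0 < w1 := by
  rw [w1, Cardinal.lt_ord, Ordinal.card_omega0]
  exact Cardinal.aleph0_lt_aleph_one

lemma add_lt_w1 {a b : Ordinal} (ha : a < w1) (hb : b < w1) : a + b < w1 := by
  rw [w1, Cardinal.lt_ord] at *
  rw [Ordinal.card_add]
  exact Cardinal.add_lt_of_lt (Cardinal.aleph0_le_aleph 1) ha hb

lemma one_lt_w1 : (1 : Ordinal) < w1 :=
  lt_trans (lt_of_lt_of_le Ordinal.one_lt_omega0 le_rfl) omega0_lt_w1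

lemma not_countable_Iio_w1 : ¬ (Set.Iio w1).Countable := by
  intro h
  have hle := h.le_aleph0
  rw [Ordinal.mk_Iio_ordinal] at hle
  simp only [w1, Cardinal.card_ord, Cardinal.lift_le_aleph0] at hle
  exact absurd hle (not_le.mpr Cardinal.aleph0_lt_aleph_one)

lemma not_countable_cantor : ¬ Countable (ℕ → Bool) := by
  intro h
  have h1 : Cardinal.mk (ℕ → Bool) ≤ Cardinal.aleph0 := Cardinal.mk_le_aleph0
  have h2 : Cardinal.mk (ℕ → Bool) = 2 ^ Cardinal.aleph0 := by
    rw [← Cardinal.power_def, Cardinal.mk_bool, Cardinal.mk_nat]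
  rw [h2] at h1
  exact absurd h1 (not_le.mpr (Cardinal.cantor Cardinal.aleph0))

lemma BSeq.Ext.trans' {s t u : BSeq} (hst : s.Ext t) (htu : t.Ext u) : s.Ext u :=
  ⟨hst.1.trans htu.1, fun i hi => (hst.2 i hi).trans (htu.2 i (lt_of_lt_of_le hi hst.1))⟩

lemma BSeq.Ext.refl' (s : BSeq) : s.Ext s := ⟨le_rfl, fun _ _ => rfl⟩

lemma ordLtSucc (a : Ordinal) : a < a + 1 :=
  (Order.lt_succ a).trans_eq (Ordinal.add_one_eq_succ a).symm

/-- The value of a binary sequence at a natural-number coordinate, as a `ℕ → Bool`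
valued function. -/
def tailSeq (s : BSeq) (ξ : Ordinal) : BSeq where
  dom := s.dom + ξ + 1
  val := fun i => if i < s.dom then s.val i else if i = s.dom + ξ then true else false
  norm := by
    intro i hi
    have h1 : ¬ i < s.dom := by
      apply not_lt.mpr
      calc s.dom ≤ s.dom + ξ := le_self_add
        _ ≤ s.dom + ξ + 1 := le_of_lt (ordLtSucc _)
        _ ≤ i := hi
    have h2 : i ≠ s.dom + ξ := by
      intro he
      exact absurd (he ▸ hi) (not_le.mpr (ordLtSucc _))
    simp [h1, h2]

lemma tailSeq_ext (s : BSeq) (ξ : Ordinal) : s.Ext (tailSeq s ξ) := by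
  constructor
  · calc s.dom ≤ s.dom + ξ := le_self_add
      _ ≤ s.dom + ξ + 1 := le_of_lt (ordLtSucc _)
  · intro i hi
    simp [tailSeq, hi]

lemma tailSeq_val_self (s : BSeq) (ξ : Ordinal) : (tailSeq s ξ).val (s.dom + ξ) = true := by
  have h1 : ¬ s.dom + ξ < s.dom := not_lt.mpr (le_self_add)
  simp [tailSeq, h1]

lemma tailSeq_val_other (s : BSeq) {ξ η : Ordinal} (h : ξ ≠ η) :
    (tailSeq s η).val (s.dom + ξ) = false := by
  have h1 : ¬ s.dom + ξ < s.dom := not_lt.mpr (le_self_add)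
  have h2 : s.dom + ξ ≠ s.dom + η := fun he => h (add_left_cancel_iff.mp he)
  simp [tailSeq, h1, h2]

/-- The set `D_s`: downward closure of the set of nodes whose `H`-value extends `s`. -/
lemma D_uncountable {T : Type} [PartialOrder T] (H : T → BSeq)
    (h2 : ∀ s : BSeq, s.dom < w1 → ∃ x : T, s.Ext (H x))
    (s : BSeq) (hs : s.dom < w1) :
    ¬ {y : T | ∃ x : T, s.Ext (H x) ∧ y ≤ x}.Countable := by
  intro hc
  -- for each ξ < ω₁ choose a node whose H-value extends `tailSeq s ξ`
  have hdomlt : ∀ ξ : Set.Iio w1, (tailSeq s ξ.1).dom < w1 := by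
    intro ξ
    exact add_lt_w1 (add_lt_w1 hs ξ.2) one_lt_w1
  have hx : ∀ ξ : Set.Iio w1, ∃ x : T, (tailSeq s ξ.1).Ext (H x) := fun ξ =>
    h2 _ (hdomlt ξ)
  choose x hxspec using hx
  have hmem : ∀ ξ, x ξ ∈ {y : T | ∃ x : T, s.Ext (H x) ∧ y ≤ x} := by
    intro ξ
    exact ⟨x ξ, (tailSeq_ext s ξ.1).trans' (hxspec ξ), le_rfl⟩
  -- values of H at the distinguishing coordinates
  have hval : ∀ ξ : Set.Iio w1, (H (x ξ)).val (s.dom + ξ.1) = true := by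
    intro ξ
    have hlt : s.dom + ξ.1 < (tailSeq s ξ.1).dom := ordLtSucc _
    rw [← (hxspec ξ).2 _ hlt]
    exact tailSeq_val_self s ξ.1
  have hval2 : ∀ ξ η : Set.Iio w1, ξ.1 < η.1 → (H (x η)).val (s.dom + ξ.1) = false := by
    intro ξ η hlt
    have hlt2 : s.dom + ξ.1 < (tailSeq s η.1).dom := by
      calc s.dom + ξ.1 < s.dom + η.1 := by
            exact add_lt_add_right hlt s.dom
        _ < s.dom + η.1 + 1 := ordLtSucc _
    rw [← (hxspec η).2 _ hlt2]
    exact tailSeq_val_other s (ne_of_lt hlt)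
  have hinj : Function.Injective x := by
    intro ξ η he
    by_contra hne
    have hne' : ξ.1 ≠ η.1 := fun h => hne (Subtype.ext h)
    rcases lt_or_gt_of_ne hne' with h | h
    · have := hval ξ
      rw [he] at this
      rw [hval2 ξ η h] at this
      exact Bool.false_ne_true this
    · have := hval η
      rw [← he] at this
      rw [hval2 η ξ h] at this
      exact Bool.false_ne_true this
  -- derive a contradiction by countability
  have : Countable ↥{y : T | ∃ x : T, s.Ext (H x) ∧ y ≤ x} := hc
  have hinj2 : Function.Injective
      (fun ξ : Set.Iio w1 => (⟨x ξ, hmem ξ⟩ : ↥{y : T | ∃ x : T, s.Ext (H x) ∧ y ≤ x})) := by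
    intro ξ η he
    exact hinj (congrArg Subtype.val he)
  have : Countable (Set.Iio w1) := hinj2.countable
  exact not_countable_Iio_w1 (Set.countable_coe_iff.mpr this)

/-- A `BSeq` of length ω coding `g : ℕ → Bool`. -/
def natSeq (g : ℕ → Bool) : BSeq where
  dom := Ordinal.omega0
  val := fun i =>
    if h : i < Ordinal.omega0 then g (Classical.choose (Ordinal.lt_omega0.mp h)) else false
  norm := fun i hi => dif_neg (not_lt.mpr hi)

lemma natSeq_val (g : ℕ → Bool) (n : ℕ) : (natSeq g).val (n : Ordinal.{0}) = g n := by
  have h : (n : Ordinal.{0}) < Ordinal.omega0 := Ordinal.nat_lt_omega0 n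
  rw [natSeq]
  simp only [dif_pos h]
  congr 1
  have hspec := Classical.choose_spec (Ordinal.lt_omega0.mp h)
  exact_mod_cast hspec.symm

/-- an ω₁-tree admitting `H : T → 2^{≤ω₁}` which is monotone,
has values extending every `s ∈ 2^{<ω₁}`, and has unbounded domains along
every cofinal branch, contains an Aronszajn subtree (an uncountable
downward-closed subtree with no cofinal branch). -/
theorem stmt3 {T : Type} [PartialOrder T] (ht : T → Ordinal) (htree : IsTreeW1 ht)
    (hcount : ∀ α : Ordinal, {x : T | ht x = α}.Countable)
    (H : T → BSeq) (hdom : ∀ x : T, (H x).dom ≤ w1)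
    (h1 : ∀ x y : T, x < y → (H x).Ext (H y))
    (h2 : ∀ s : BSeq, s.dom < w1 → ∃ x : T, s.Ext (H x))
    (h3 : ∀ b : Set T, IsBranch ht b → ∀ ζ < w1, ∃ y ∈ b, ζ ≤ (H y).dom) :
    ∃ U : Set T, ¬ U.Countable ∧ (∀ x ∈ U, ∀ y : T, y < x → y ∈ U) ∧
      ∀ b : Set T, IsBranch ht b → ¬ b ⊆ U := by
  classical
  -- the H-monotonicity for ≤
  have h1' : ∀ x y : T, x ≤ y → (H x).Ext (H y) := by
    intro x y hxy
    rcases eq_or_lt_of_le hxy with rfl | hlt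
    · exact BSeq.Ext.refl' _
    · exact h1 x y hlt
  set U : Set T := {x : T | (H x).dom < Ordinal.omega0} with hUdef
  by_cases hU : U.Countable
  · -- Case B : U is countable; by contradiction
    by_contra hcon
    push_neg at hcon
    -- find a level α₀ avoiding all heights of elements of U
    have hA : (ht '' U).Countable := hU.image ht
    have hnsub : ¬ Set.Iio w1 ⊆ ht '' U := fun h => not_countable_Iio_w1 (hA.mono h)
    obtain ⟨α₀, hα₀lt, hα₀A⟩ := Set.not_subset.mp hnsub
    -- for each g : ℕ → Bool, the set D_g
    have key : ∀ g : ℕ → Bool, ∃ y : T, ht y = α₀ ∧ ∀ n : ℕ, (H y).val (n : Ordinal) = g n := by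
      intro g
      set D : Set T := {y : T | ∃ x : T, (natSeq g).Ext (H x) ∧ y ≤ x} with hDdef
      have hDun : ¬ D.Countable := D_uncountable H h2 (natSeq g) omega0_lt_w1
      have hDdc : ∀ x ∈ D, ∀ y : T, y < x → y ∈ D := by
        rintro x ⟨z, hz, hxz⟩ y hyx
        exact ⟨z, hz, le_trans (le_of_lt hyx) hxz⟩
      obtain ⟨b, hb, hbD⟩ := hcon D hDun hDdc
      obtain ⟨y, hyb, hyht⟩ := hb.2.2 α₀ hα₀lt
      obtain ⟨x, hx, hyx⟩ := hbD hyb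
      -- y is not in U, since its height avoids heights of U
      have hyU : Ordinal.omega0 ≤ (H y).dom := by
        by_contra hlt
        exact hα₀A ⟨y, not_le.mp hlt, hyht⟩
      refine ⟨y, hyht, ?_⟩
      intro n
      have hn : (n : Ordinal) < Ordinal.omega0 := Ordinal.nat_lt_omega0 n
      have e1 : (H y).val (n : Ordinal) = (H x).val (n : Ordinal) :=
        (h1' y x hyx).2 _ (lt_of_lt_of_le hn hyU)
      have e2 : (natSeq g).val (n : Ordinal) = (H x).val (n : Ordinal) := hx.2 _ hn
      rw [e1, ← e2, natSeq_val]
    choose Y hY1 hY2 using key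
    -- Y is injective into a countable level
    have hYinj : Function.Injective Y := by
      intro g g' he
      funext n
      rw [← hY2 g n, he, hY2 g' n]
    have hlev : Countable ↥{x : T | ht x = α₀} := hcount α₀
    have hinj2 : Function.Injective (fun g : ℕ → Bool => (⟨Y g, hY1 g⟩ : ↥{x : T | ht x = α₀})) := by
      intro g g' he
      exact hYinj (congrArg Subtype.val he)
    exact not_countable_cantor hinj2.countable
  · -- Case A : U itself is an Aronszajn subtree
    refine ⟨U, hU, ?_, ?_⟩
    · intro x hx y hyx
      exact lt_of_le_of_lt (h1 y x hyx).1 hx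
    · intro b hb hbU
      obtain ⟨y, hyb, hy⟩ := h3 b hb Ordinal.omega0 omega0_lt_w1
      exact absurd (hbU hyb) (not_lt.mpr hy)
end
end

section
/- Suppose T is an ω₁-tree and H : T → 2^{≤ω₁} satisfies: (1) x <_T y implies H(x) ⊆ H(y); (2) for all s ∈ 2^{<ω₁} there exists x ∈ T with s ⊆ H(x). Then there is some x ∈ T with H(x) ∈ 2^{<ω₁} such that for every ζ with ht_T(x) < ζ < ω₁, there exists y in level ζ of T with x <_T y and H(x) = H(y). -/
noncomputable section

section Aux

lemma BSeq.eq_of_ext {s t : BSeq} (h : s.Ext t) (h2 : t.dom ≤ s.dom) : s = t := by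
  obtain ⟨d1, v1, n1⟩ := s
  obtain ⟨d2, v2, n2⟩ := t
  obtain ⟨hle, hag⟩ := h
  simp only [BSeq.mk.injEq]
  have hd : d1 = d2 := le_antisymm hle h2
  subst hd
  refine ⟨rfl, funext fun i => ?_⟩
  rcases lt_or_ge i d1 with hi | hi
  · exact hag i hi
  · rw [n1 i hi, n2 i hi]

/-- The length-`ω` binary sequence coded by `f : ℕ → Bool`. -/
def mkSeq (f : ℕ → Bool) : BSeq :=
  ⟨Ordinal.omega0,
   fun i => if h : i < Ordinal.omega0 then f (Ordinal.lt_omega0.mp h).choose else false,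
   fun _ hi => dif_neg (not_lt.mpr hi)⟩

lemma mkSeq_dom (f : ℕ → Bool) : (mkSeq f).dom = Ordinal.omega0 := rfl

lemma mkSeq_val (f : ℕ → Bool) (n : ℕ) : (mkSeq f).val n = f n := by
  have h : (n : Ordinal.{0}) < Ordinal.omega0 := Ordinal.nat_lt_omega0 n
  have hc := (Ordinal.lt_omega0.mp h).choose_spec
  have : (Ordinal.lt_omega0.mp h).choose = n := by exact_mod_cast hc.symm
  simp [mkSeq, dif_pos h, this]

lemma w1_isLimit : Order.IsSuccLimit w1 := Cardinal.isSuccLimit_ord (Cardinal.aleph0_le_aleph 1)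

lemma succ_lt_w1 {o : Ordinal} (h : o < w1) : o + 1 < w1 := by
  rw [Ordinal.add_one_eq_succ]
  exact w1_isLimit.succ_lt h

lemma countable_Iio_of_lt_w1 {o : Ordinal.{0}} (h : o < w1) : (Set.Iio o).Countable := by
  have hcard : o.card < Cardinal.aleph 1 := Cardinal.lt_ord.mp h
  have hcard2 : o.card ≤ Cardinal.aleph0 := by
    rw [← Cardinal.succ_aleph0] at hcard
    exact Order.lt_succ_iff.mp hcard
  have h1 : Countable o.ToType := by
    rw [← Cardinal.mk_le_aleph0_iff, Cardinal.mk_toType]; exact hcard2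
  have h2 := Countable.of_equiv _ (Ordinal.ToType.mk (o := o)).toEquiv.symm
  exact Set.countable_coe_iff.mp h2

end Aux

/-- if `H : T → 2^{≤ω₁}` on an ω₁-tree is monotone and every
`s ∈ 2^{<ω₁}` is extended by some value of `H`, then there is `x ∈ T` with
`H(x) ∈ 2^{<ω₁}` such that on every level above `x` there is a node `y` above
`x` with `H(y) = H(x)`. -/
theorem stmt4 {T : Type} [PartialOrder T] (ht : T → Ordinal) (htree : IsTreeW1 ht)
    (hcount : ∀ α : Ordinal, {x : T | ht x = α}.Countable)
    (H : T → BSeq) (hdom : ∀ x : T, (H x).dom ≤ w1)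
    (h1 : ∀ x y : T, x < y → (H x).Ext (H y))
    (h2 : ∀ s : BSeq, s.dom < w1 → ∃ x : T, s.Ext (H x)) :
    ∃ x : T, (H x).dom < w1 ∧
      ∀ ζ : Ordinal, ht x < ζ → ζ < w1 → ∃ y : T, ht y = ζ ∧ x < y ∧ H y = H x := by
  classical
  by_contra hneg
  push_neg at hneg
  have hmono : ∀ {a b : T}, a ≤ b → ht a ≤ ht b := by
    intro a b hab
    rcases hab.lt_or_eq with h' | h'
    · exact le_of_lt (htree.lt_ht h')
    · rw [h']
  -- the killing-level function γ
  have hga : ∀ x : T, ∃ ζ : Ordinal, ζ < w1 ∧ ht x < ζ ∧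
      ((H x).dom < w1 → ∀ y, ht y = ζ → x < y → H y ≠ H x) := by
    intro x
    by_cases hx : (H x).dom < w1
    · obtain ⟨ζ, ha, hb, hc⟩ := hneg x hx
      exact ⟨ζ, hb, ha, fun _ => hc⟩
    · refine ⟨ht x + 1, succ_lt_w1 (htree.ht_lt x), ?_, fun h => absurd h hx⟩
      rw [Ordinal.add_one_eq_succ]; exact Order.lt_succ _
  choose γ hγ1 hγ2 hγ3 using hga
  -- countability of initial parts of the tree
  have hlow : ∀ β : Ordinal, β < w1 → {x : T | ht x ≤ β}.Countable := by
    intro β hβ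
    have hE : {x : T | ht x ≤ β} = ⋃ α ∈ Set.Iio (β + 1), {x : T | ht x = α} := by
      ext x
      simp only [Set.mem_setOf_eq, Set.mem_iUnion, Set.mem_Iio, exists_prop]
      constructor
      · intro h
        exact ⟨ht x, by rw [Ordinal.add_one_eq_succ]; exact Order.lt_succ_iff.mpr h, rfl⟩
      · rintro ⟨α, hα, rfl⟩
        rw [Ordinal.add_one_eq_succ] at hα
        exact Order.lt_succ_iff.mp hα
    rw [hE]
    exact (countable_Iio_of_lt_w1 (succ_lt_w1 hβ)).biUnion (fun α _ => hcount α)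
  have hcof : w1.cof = Cardinal.aleph 1 := Cardinal.isRegular_aleph_one.cof_eq
  -- closure operator and its iteration
  set Φ : Ordinal → Ordinal :=
    fun β => max (β + 1) (Ordinal.lsub.{0, 0} (fun p : {x : T // ht x ≤ β} => γ p.1)) with hΦ
  have hΦlt : ∀ β, β < w1 → Φ β < w1 := by
    intro β hβ
    refine max_lt (succ_lt_w1 hβ) (Ordinal.lsub_lt_ord ?_ (fun i => hγ1 i.1))
    rw [hcof]
    exact (Cardinal.countable_iff_lt_aleph_one {x : T | ht x ≤ β}).mp (hlow β hβ)
  set Z : ℕ → Ordinal := fun n => Φ^[n] 0 with hZ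
  have hZsucc : ∀ n, Z (n + 1) = Φ (Z n) := fun n => Function.iterate_succ_apply' Φ n 0
  have hZlt : ∀ n, Z n < w1 := by
    intro n
    induction n with
    | zero => exact Ordinal.omega0_pos.trans omega0_lt_w1
    | succ n ih => rw [hZsucc]; exact hΦlt _ ih
  set ζs : Ordinal := Ordinal.lsub.{0, 0} Z with hζs
  have hζlt : ζs < w1 := by
    refine Ordinal.lsub_lt_ord ?_ hZlt
    rw [hcof, Cardinal.mk_nat]
    exact Cardinal.aleph0_lt_aleph_one
  have hζpos : (0 : Ordinal) < ζs := Ordinal.lt_lsub Z 0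
  have hclo : ∀ x : T, ht x < ζs → γ x < ζs := by
    intro x hx
    obtain ⟨n, hn⟩ := Ordinal.lt_lsub_iff.mp hx
    have hlt1 : γ x < Z (n + 1) := by
      rw [hZsucc]
      exact lt_of_lt_of_le
        (Ordinal.lt_lsub (fun p : {x : T // ht x ≤ Z n} => γ p.1) ⟨x, hn⟩)
        (le_max_right _ _)
    exact hlt1.trans (Ordinal.lt_lsub Z (n + 1))
  -- minimal witnesses
  have hwit : ∀ f : ℕ → Bool, ∃ y : T, (mkSeq f).Ext (H y) ∧
      ∀ z : T, (mkSeq f).Ext (H z) → ht y ≤ ht z := by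
    intro f
    obtain ⟨x, hx⟩ := h2 (mkSeq f) (by rw [mkSeq_dom]; exact omega0_lt_w1)
    have hA : {o : Ordinal | ∃ y : T, ht y = o ∧ (mkSeq f).Ext (H y)}.Nonempty :=
      ⟨ht x, x, rfl, hx⟩
    obtain ⟨y, hy, hyext⟩ := csInf_mem hA
    refine ⟨y, hyext, fun z hz => ?_⟩
    rw [hy]
    exact csInf_le' ⟨z, rfl, hz⟩
  choose Y hY1 hY2 using hwit
  -- strict predecessors of Y f have finite domain
  have hfin : ∀ (f : ℕ → Bool) (z : T), z < Y f → (H z).dom < Ordinal.omega0 := by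
    intro f z hz
    by_contra hge
    push_neg at hge
    have hext : (mkSeq f).Ext (H z) := by
      refine ⟨by rw [mkSeq_dom]; exact hge, ?_⟩
      intro i hi
      rw [mkSeq_dom] at hi
      have e1 := (hY1 f).2 i (by rw [mkSeq_dom]; exact hi)
      have e2 := (h1 z (Y f) hz).2 i (lt_of_lt_of_le hi hge)
      rw [e1, ← e2]
    exact absurd (htree.lt_ht hz) (not_lt.mpr (hY2 f z hext))
  -- the key claim: all minimal witnesses live below ζs
  have hle : ∀ f : ℕ → Bool, ht (Y f) ≤ ζs := by
    intro f
    by_contra hgt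
    push_neg at hgt
    have hstep : ∀ n : ℕ, ∃ z : T, z < Y f ∧ ht z < ζs ∧ (n : Ordinal) ≤ (H z).dom := by
      intro n
      induction n with
      | zero =>
        obtain ⟨z, hz1, hz2⟩ := htree.pred_exists (Y f) 0 (hζpos.trans hgt)
        exact ⟨z, hz1, by rw [hz2]; exact hζpos, by simp⟩
      | succ n ih =>
        obtain ⟨z, hz1, hz2, hz3⟩ := ih
        have hγζ : γ z < ζs := hclo z hz2
        obtain ⟨w, hw1, hw2⟩ := htree.pred_exists (Y f) (γ z) (hγζ.trans hgt)
        have hh : ht z < ht w := by rw [hw2]; exact hγ2 z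
        have hzw : z < w := by
          rcases htree.pred_linear hz1 hw1 with h | h
          · exact lt_of_le_of_ne h (fun he => absurd hh (by rw [he]; exact lt_irrefl _))
          · exact absurd hh (not_lt.mpr (hmono h))
        have hne : H w ≠ H z :=
          hγ3 z ((hfin f z hz1).trans omega0_lt_w1) w hw2 hzw
        have hdlt : (H z).dom < (H w).dom := by
          have hext := h1 z w hzw
          refine lt_of_le_of_ne hext.1 (fun he => hne ?_)
          exact (BSeq.eq_of_ext hext (le_of_eq he.symm)).symm
        refine ⟨w, hw1, by rw [hw2]; exact hγζ, ?_⟩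
        rw [Nat.cast_succ, Ordinal.add_one_eq_succ]
        exact Order.succ_le_of_lt (lt_of_le_of_lt hz3 hdlt)
    obtain ⟨zs', hzs1, hzs2⟩ := htree.pred_exists (Y f) ζs hgt
    have hωle : Ordinal.omega0 ≤ (H zs').dom := by
      rw [Ordinal.omega0_le]
      intro n
      obtain ⟨z, hz1, hz2, hz3⟩ := hstep n
      have hlz : z ≤ zs' := by
        rcases htree.pred_linear hz1 hzs1 with h | h
        · exact h
        · exact absurd (hz2.trans_le (le_of_eq hzs2.symm)) (not_lt.mpr (hmono h))
      have hdomle : (H z).dom ≤ (H zs').dom := by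
        rcases hlz.lt_or_eq with h' | h'
        · exact (h1 z zs' h').1
        · rw [h']
      exact le_trans hz3 hdomle
    exact absurd (hfin f zs' hzs1) (not_lt.mpr hωle)
  -- injectivity and the counting contradiction
  have hinj : Function.Injective
      (fun f : ℕ → Bool => (⟨Y f, hle f⟩ : {x : T | ht x ≤ ζs})) := by
    intro f g he
    have he' : Y f = Y g := congrArg Subtype.val he
    funext n
    have e1 : (mkSeq f).val n = (H (Y f)).val n :=
      (hY1 f).2 n (by rw [mkSeq_dom]; exact Ordinal.nat_lt_omega0 n)
    have e2 : (mkSeq g).val n = (H (Y g)).val n :=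
      (hY1 g).2 n (by rw [mkSeq_dom]; exact Ordinal.nat_lt_omega0 n)
    rw [mkSeq_val] at e1 e2
    rw [he'] at e1
    exact e1.trans e2.symm
  have hctble : Countable ↥{x : T | ht x ≤ ζs} := (hlow ζs hζlt).to_subtype
  have hC : Countable (ℕ → Bool) := hinj.countable
  have hcard : Cardinal.mk (ℕ → Bool) ≤ Cardinal.aleph0 := Cardinal.mk_le_aleph0
  rw [← Cardinal.power_def, Cardinal.mk_bool, Cardinal.mk_nat] at hcard
  exact absurd hcard (not_le.mpr (Cardinal.cantor _))
end
end

section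
/- Suppose ⟨(t_n,h_n) : n < ω⟩ is a strictly decreasing sequence of conditions in the poset P. Let t' = ⋃_n t_n and h' = ⋃_n h_n. Then for every x ∈ t' there exists a cofinal branch b of t' with x ⊆ b such that for all y ∈ t' with x ⊆ y ⊆ b, h'(y) = h'(x). -/
noncomputable section

/-- `SBCT t δ` : `t` is a standard binary countable tree with top level `δ`:
a countable downward-closed subtree of `2^{≤δ}` (with `δ < ω₁`) containing the
empty sequence, in which every node of height `< δ` has both one-step
extensions, and every node extends to a node of height `δ`. -/
def SBCT (t : Set BSeq) (δ : Ordinal) : Prop :=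
  δ < w1 ∧ t.Countable ∧ BSeq.nil ∈ t ∧
  (∀ x ∈ t, x.dom ≤ δ) ∧
  (∀ x ∈ t, ∀ α : Ordinal, x.restrict α ∈ t) ∧
  (∀ x ∈ t, x.dom < δ → ∀ i : Bool, ∃ z ∈ t, z.dom = x.dom + 1 ∧ x.Ext z ∧ z.val x.dom = i) ∧
  (∀ x ∈ t, ∃ y ∈ t, y.dom = δ ∧ x.Ext y)

/-- `u` end-extends `t`: `δt ≤ δu` and `u ∩ 2^{≤δt} = t`. -/
def EndExt (t : Set BSeq) (δt : Ordinal) (u : Set BSeq) (δu : Ordinal) : Prop :=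
  δt ≤ δu ∧ ∀ x : BSeq, (x ∈ u ∧ x.dom ≤ δt) ↔ x ∈ t

/-- A condition in the poset `P`: a standard binary countable tree `t` with top
level `δ` together with `h : t → 2^{<ω₁}` satisfying `h(∅) = ∅`, monotonicity,
continuity at limit heights (h(z) is the least upper bound of the values at
proper initial segments), and attainment of every `h`-value on the top level. -/
def PCond (t : Set BSeq) (δ : Ordinal) (h : BSeq → BSeq) : Prop :=
  SBCT t δ ∧
  h BSeq.nil = BSeq.nil ∧
  (∀ x ∈ t, (h x).dom < w1) ∧
  (∀ x ∈ t, ∀ y ∈ t, x.Ext y → (h x).Ext (h y)) ∧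
  (∀ z ∈ t, Order.IsSuccLimit z.dom →
    ∀ s : BSeq, (∀ y ∈ t, y.Ext z → y ≠ z → (h y).Ext s) → (h z).Ext s) ∧
  (∀ x ∈ t, ∃ y ∈ t, y.dom = δ ∧ x.Ext y ∧ h x = h y)

/-- The ordering of the poset `P`: `(u,k) ≤ (t,h)` iff `u` end-extends `t` and `k` extends `h`. -/
def PLe (u : Set BSeq) (δu : Ordinal) (k : BSeq → BSeq)
    (t : Set BSeq) (δt : Ordinal) (h : BSeq → BSeq) : Prop :=
  EndExt t δt u δu ∧ ∀ x ∈ t, k x = h x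

theorem BSeq.ext' {s u : BSeq} (hd : s.dom = u.dom) (hv : s.val = u.val) : s = u := by
  cases s; cases u; simp_all

theorem BSeq.Ext.trans'_s8 {s u v : BSeq} (h1 : s.Ext u) (h2 : u.Ext v) : s.Ext v :=
  ⟨h1.1.trans h2.1, fun i hi => (h1.2 i hi).trans (h2.2 i (hi.trans_le h1.1))⟩

theorem BSeq.Ext.antisymm' {s u : BSeq} (h1 : s.Ext u) (h2 : u.Ext s) : s = u := by
  have hd : s.dom = u.dom := le_antisymm h1.1 h2.1
  refine BSeq.ext' hd (funext fun i => ?_)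
  by_cases hi : i < s.dom
  · exact h1.2 i hi
  · rw [s.norm i (not_lt.mp hi), u.norm i (by rw [← hd]; exact not_lt.mp hi)]

/-- given a strictly decreasing ω-sequence of conditions of `P`
with union tree `t' = ⋃ t_n` and union labeling `h' = ⋃ h_n`, every `x ∈ t'`
lies on a cofinal branch `b` of `t'` along which `h'` is constant above `x`. -/
theorem stmt8 (t : ℕ → Set BSeq) (δ : ℕ → Ordinal) (h : ℕ → BSeq → BSeq)
    (hP : ∀ n, PCond (t n) (δ n) (h n))
    (hle : ∀ n, PLe (t (n+1)) (δ (n+1)) (h (n+1)) (t n) (δ n) (h n))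
    (hne : ∀ n, t (n+1) ≠ t n) :
    ∀ m : ℕ, ∀ x ∈ t m, ∃ b : BSeq,
      b.dom = (⨆ n, δ n) ∧ (∀ α < (⨆ n, δ n), b.restrict α ∈ ⋃ n, t n) ∧
      x.Ext b ∧
      ∀ n, ∀ y ∈ t n, x.Ext y → y.Ext b → h n y = h m x := by
  classical
  intro m x hx
  -- basic monotonicity facts
  have tmono : ∀ {n N : ℕ}, n ≤ N → t n ⊆ t N := by
    intro n N hnN
    induction hnN with
    | refl => exact fun _ hw => hw
    | @step k _ ih =>
      exact fun w hw => (((hle k).1.2 w).mpr (ih hw)).1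
  have δmono : ∀ {n N : ℕ}, n ≤ N → δ n ≤ δ N := by
    intro n N hnN
    induction hnN with
    | refl => exact le_rfl
    | @step k _ ih =>
      exact ih.trans (hle k).1.1
  have hagree : ∀ {n N : ℕ}, n ≤ N → ∀ w ∈ t n, h N w = h n w := by
    intro n N hnN
    induction hnN with
    | refl => exact fun _ _ => rfl
    | @step k hk ih =>
      exact fun w hw => ((hle k).2 w (tmono hk hw)).trans (ih w hw)
  have bdd : BddAbove (Set.range δ) := by
    refine ⟨w1, ?_⟩
    rintro _ ⟨n, rfl⟩
    exact ((hP n).1.1).le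
  have hsup_le : ∀ n, δ n ≤ ⨆ n, δ n := fun n => le_ciSup bdd n
  -- choice of top-level extensions with the same h-value
  have attain : ∀ n, ∀ w : BSeq, ∃ y : BSeq, w ∈ t n →
      y ∈ t n ∧ y.dom = δ n ∧ w.Ext y ∧ h n w = h n y := by
    intro n w
    by_cases hw : w ∈ t n
    · obtain ⟨y, hy, hd, he, hh⟩ := (hP n).2.2.2.2.2 w hw
      exact ⟨y, fun _ => ⟨hy, hd, he, hh⟩⟩
    · exact ⟨w, fun hw' => absurd hw' hw⟩
  choose g hg using attain
  -- the chain z : ℕ → BSeq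
  obtain ⟨z, hz0, hzs⟩ : ∃ z : ℕ → BSeq, z 0 = g m x ∧
      ∀ k, z (k+1) = g (m+k+1) (z k) :=
    ⟨fun k => Nat.rec (g m x) (fun k' zk => g (m+k'+1) zk) k, rfl, fun _ => rfl⟩
  have key : ∀ k, z k ∈ t (m+k) ∧ (z k).dom = δ (m+k) ∧
      h (m+k) (z k) = h m x ∧ x.Ext (z k) := by
    intro k
    induction k with
    | zero =>
      obtain ⟨h1, h2, h3, h4⟩ := hg m x hx
      rw [hz0]
      exact ⟨h1, h2, h4.symm, h3⟩
    | succ k ih =>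
      obtain ⟨hmem, hdom, hh, hxe⟩ := ih
      have hmem' : z k ∈ t (m+k+1) := tmono (Nat.le_succ _) hmem
      obtain ⟨h1, h2, h3, h4⟩ := hg (m+k+1) (z k) hmem'
      rw [hzs]
      refine ⟨h1, h2, ?_, hxe.trans'_s8 h3⟩
      show h (m+k+1) (g (m+k+1) (z k)) = h m x
      rw [← h4, hagree (Nat.le_succ (m+k)) (z k) hmem, hh]
  have zchain : ∀ k l, k ≤ l → (z k).Ext (z l) := by
    intro k l hkl
    induction hkl with
    | refl => exact ⟨le_rfl, fun _ _ => rfl⟩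
    | @step j _ ih =>
      refine ih.trans'_s8 ?_
      rw [hzs j]
      exact (hg (m+j+1) (z j) (tmono (Nat.le_succ _) (key j).1)).2.2.1
  -- the branch b
  obtain ⟨b, hbd, hbv⟩ : ∃ b : BSeq, b.dom = (⨆ n, δ n) ∧
      ∀ i, b.val i = (if ∃ k, i < δ (m+k) ∧ (z k).val i = true then true else false) := by
    refine ⟨⟨⨆ n, δ n,
      fun i => if ∃ k, i < δ (m+k) ∧ (z k).val i = true then true else false, ?_⟩,
      rfl, fun _ => rfl⟩
    intro i hi
    have hne' : ¬∃ k, i < δ (m+k) ∧ (z k).val i = true := by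
      rintro ⟨k, hk, -⟩
      exact absurd hk (not_lt.mpr ((hsup_le (m+k)).trans hi))
    simp only [if_neg hne']
  have bval : ∀ k i, i < δ (m+k) → b.val i = (z k).val i := by
    intro k i hik
    rw [hbv]
    by_cases hex : ∃ k', i < δ (m+k') ∧ (z k').val i = true
    · obtain ⟨k', hk', hv'⟩ := hex
      have hzz : (z k).val i = (z k').val i := by
        rcases le_total k k' with hkk | hkk
        · exact (zchain k k' hkk).2 i (by rw [(key k).2.1]; exact hik)
        · exact ((zchain k' k hkk).2 i (by rw [(key k').2.1]; exact hk')).symm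
      rw [if_pos ⟨k', hk', hv'⟩]
      exact (hzz.trans hv').symm
    · rw [if_neg hex]
      cases hzk : (z k).val i with
      | false => rfl
      | true => exact absurd ⟨k, hik, hzk⟩ hex
  refine ⟨b, hbd, ?_, ?_, ?_⟩
  · -- restrictions lie in the union
    intro α hα
    obtain ⟨n, hn⟩ := (lt_ciSup_iff bdd).mp hα
    have hαk : α < δ (m+n) := hn.trans_le (δmono (Nat.le_add_left n m))
    have hrb : b.restrict α = (z n).restrict α := by
      refine BSeq.ext' ?_ (funext fun i => ?_)
      · show min α b.dom = min α (z n).dom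
        rw [hbd, (key n).2.1, min_eq_left hα.le, min_eq_left hαk.le]
      · show (if i < α ∧ i < b.dom then b.val i else false) =
          (if i < α ∧ i < (z n).dom then (z n).val i else false)
        by_cases hiα : i < α
        · have h1 : i < b.dom := by rw [hbd]; exact hiα.trans hα
          have h2 : i < (z n).dom := by rw [(key n).2.1]; exact hiα.trans hαk
          rw [if_pos ⟨hiα, h1⟩, if_pos ⟨hiα, h2⟩]
          exact bval n i (hiα.trans hαk)
        · rw [if_neg (fun hc => hiα hc.1), if_neg (fun hc => hiα hc.1)]
    rw [hrb]
    exact Set.mem_iUnion.mpr ⟨m+n, (hP (m+n)).1.2.2.2.2.1 (z n) (key n).1 α⟩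
  · -- x ⊆ b
    refine ((key 0).2.2.2).trans'_s8 ⟨?_, ?_⟩
    · rw [(key 0).2.1, hbd]; exact hsup_le (m+0)
    · intro i hi
      exact (bval 0 i (by rw [← (key 0).2.1]; exact hi)).symm
  · -- constancy of h along the branch above x
    intro n y hyn hxy hyb
    have hyN : y ∈ t (m+n) := tmono (Nat.le_add_left n m) hyn
    have hxN : x ∈ t (m+n) := tmono (Nat.le_add_right m n) hx
    have hydom : y.dom ≤ δ (m+n) :=
      ((hP n).1.2.2.2.1 y hyn).trans (δmono (Nat.le_add_left n m))
    have hyz : y.Ext (z n) := by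
      refine ⟨by rw [(key n).2.1]; exact hydom, fun i hi => ?_⟩
      rw [hyb.2 i hi, bval n i (hi.trans_le hydom)]
    have e1 : (h (m+n) x).Ext (h (m+n) y) := (hP (m+n)).2.2.2.1 x hxN y hyN hxy
    have e2 : (h (m+n) y).Ext (h (m+n) (z n)) :=
      (hP (m+n)).2.2.2.1 y hyN (z n) (key n).1 hyz
    have e3 : h (m+n) (z n) = h m x := (key n).2.2.1
    have e4 : h (m+n) x = h m x := hagree (Nat.le_add_right m n) x hx
    rw [e3, ← e4] at e2
    rw [← hagree (Nat.le_add_left n m) y hyn, (e1.antisymm' e2).symm, e4]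
end
end

section
/- Suppose ⟨(t_n,h_n) : n < ω⟩ is a strictly decreasing sequence of conditions in P, t' = ⋃ t_n, h' = ⋃ h_n, δ = sup δ_{t_n}, and B is a countable set of cofinal branches of t' such that for all x ∈ t' there exists b ∈ B with x ⊆ b and h'(y) = h'(x) for all y ∈ t' with x ⊆ y ⊆ b. Define t = t' ∪ B and h : t → 2^{<ω₁} with h↾t' = h' and h(b) = ⋃{h'(y) : y ∈ t', y ⊆ b} for b ∈ B. Then (t,h) ∈ P, δ_t = δ, top(t) = B, and (t,h) ≤ (t_n,h_n) for all n. In particular, the poset P is σ-closed. -/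
noncomputable section

namespace BSeq

theorem ext'_s9 {s t : BSeq} (hd : s.dom = t.dom) (hv : ∀ i, s.val i = t.val i) : s = t := by
  cases s; cases t
  simp only [mk.injEq]
  exact ⟨hd, funext hv⟩

theorem Ext.refl (s : BSeq) : s.Ext s := ⟨le_rfl, fun _ _ => rfl⟩

theorem Ext.trans {s t u : BSeq} (h1 : s.Ext t) (h2 : t.Ext u) : s.Ext u :=
  ⟨h1.1.trans h2.1, fun i hi => (h1.2 i hi).trans (h2.2 i (lt_of_lt_of_le hi h1.1))⟩

theorem Ext.antisymm {s t : BSeq} (h1 : s.Ext t) (h2 : t.Ext s) : s = t := by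
  have hd : s.dom = t.dom := le_antisymm h1.1 h2.1
  refine ext'_s9 hd fun i => ?_
  rcases lt_or_ge i s.dom with hi | hi
  · exact h1.2 i hi
  · rw [s.norm i hi, t.norm i (hd ▸ hi)]

theorem Ext.eq_of_dom_le {s t : BSeq} (h1 : s.Ext t) (h2 : t.dom ≤ s.dom) : s = t :=
  h1.antisymm ⟨h2, fun i hi => (h1.2 i (lt_of_lt_of_le hi h2)).symm⟩

theorem nil_ext (s : BSeq) : nil.Ext s :=
  ⟨zero_le, fun i hi => absurd hi not_lt_zero⟩

theorem restrict_eq_self {s : BSeq} {α : Ordinal} (h : s.dom ≤ α) : s.restrict α = s := by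
  refine ext'_s9 (min_eq_right h) fun i => ?_
  simp only [restrict]
  split
  · rfl
  · rename_i hc
    rcases lt_or_ge i s.dom with hi | hi
    · exact absurd ⟨lt_of_lt_of_le hi h, hi⟩ hc
    · exact (s.norm i hi).symm

theorem restrict_ext (s : BSeq) (α : Ordinal) : (s.restrict α).Ext s := by
  refine ⟨min_le_right _ _, fun i hi => ?_⟩
  have h1 : i < α := lt_of_lt_of_le hi (min_le_left _ _)
  have h2 : i < s.dom := lt_of_lt_of_le hi (min_le_right _ _)
  simp [restrict, h1, h2]

theorem restrict_of_ext {s t : BSeq} (h : s.Ext t) {α : Ordinal} (hα : α ≤ s.dom) :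
    t.restrict α = s.restrict α := by
  have hd : min α t.dom = min α s.dom := by
    rw [min_eq_left (hα.trans h.1), min_eq_left hα]
  refine ext'_s9 hd fun i => ?_
  simp only [restrict]
  rcases lt_or_ge i α with hi | hi
  · have h2 : i < s.dom := lt_of_lt_of_le hi hα
    have h3 : i < t.dom := lt_of_lt_of_le h2 h.1
    simp [hi, h2, h3, (h.2 i h2).symm]
  · have : ¬ (i < α ∧ i < t.dom) := fun hc => absurd hc.1 (not_lt.mpr hi)
    have h2 : ¬ (i < α ∧ i < s.dom) := fun hc => absurd hc.1 (not_lt.mpr hi)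
    simp [this, h2]

theorem ext_iff_restrict {s t : BSeq} : s.Ext t ↔ (s.dom ≤ t.dom ∧ t.restrict s.dom = s) := by
  constructor
  · intro h
    refine ⟨h.1, ?_⟩
    rw [restrict_of_ext h le_rfl, restrict_eq_self le_rfl]
  · rintro ⟨h1, h2⟩
    exact h2 ▸ restrict_ext t s.dom

/-- Two initial segments of the same sequence are comparable. -/
theorem ext_comparable {s t u : BSeq} (h1 : s.Ext u) (h2 : t.Ext u) :
    s.Ext t ∨ t.Ext s := by
  rcases le_total s.dom t.dom with hd | hd
  · exact Or.inl ⟨hd, fun i hi => (h1.2 i hi).trans (h2.2 i (lt_of_lt_of_le hi hd)).symm⟩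
  · exact Or.inr ⟨hd, fun i hi => (h2.2 i hi).trans (h1.2 i (lt_of_lt_of_le hi hd)).symm⟩

open Classical in
/-- Union of a countable chain of `BSeq`s. -/
def chainUnion (f : ℕ → BSeq) : BSeq where
  dom := ⨆ n, (f n).dom
  val := fun i => if h : ∃ n, i < (f n).dom then (f h.choose).val i else false
  norm := by
    intro i hi
    have : ¬ ∃ n, i < (f n).dom := by
      rintro ⟨n, hn⟩
      exact absurd (lt_of_lt_of_le hn (Ordinal.le_iSup _ n)) (not_lt.mpr hi)
    simp [this]

theorem ext_chainUnion {f : ℕ → BSeq} (hc : ∀ m n, (f m).Ext (f n) ∨ (f n).Ext (f m))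
    (n : ℕ) : (f n).Ext (chainUnion f) := by
  refine ⟨Ordinal.le_iSup _ n, fun i hi => ?_⟩
  have h : ∃ m, i < (f m).dom := ⟨n, hi⟩
  simp only [chainUnion, h, dif_pos]
  rcases hc n h.choose with hx | hx
  · exact hx.2 i hi
  · exact (hx.2 i h.choose_spec).symm

theorem chainUnion_ext {f : ℕ → BSeq} {s : BSeq} (hs : ∀ n, (f n).Ext s) :
    (chainUnion f).Ext s := by
  classical
  refine ⟨Ordinal.iSup_le fun n => (hs n).1, fun i hi => ?_⟩
  have h : ∃ m, i < (f m).dom := by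
    have hi' : i < ⨆ n, (f n).dom := hi
    rwa [Ordinal.lt_iSup_iff] at hi'
  simp only [chainUnion, h, dif_pos]
  exact (hs h.choose).2 i h.choose_spec

theorem chainUnion_dom (f : ℕ → BSeq) : (chainUnion f).dom = ⨆ n, (f n).dom := rfl

end BSeq

/-- A countable supremum of ordinals below `ω₁` is below `ω₁`. -/
theorem ctble_sup_lt_w1 {f : ℕ → Ordinal} (hf : ∀ n, f n < w1) : (⨆ n, f n) < w1 := by
  refine Ordinal.iSup_lt_ord ?_ hf
  rw [show w1.cof = (Cardinal.aleph 1).ord.cof from rfl, Cardinal.isRegular_aleph_one.cof_eq]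
  simpa using Cardinal.aleph0_lt_aleph_one

open Set BSeq

theorem BSeq.ext_of_ext_of_dom_le {s t u : BSeq} (h1 : s.Ext u) (h2 : t.Ext u)
    (hd : s.dom ≤ t.dom) : s.Ext t :=
  ⟨hd, fun i hi => (h1.2 i hi).trans (h2.2 i (lt_of_lt_of_le hi hd)).symm⟩

theorem BSeq.ext_mono {f : ℕ → BSeq} (hf : ∀ i, (f i).Ext (f (i+1))) :
    ∀ {m n : ℕ}, m ≤ n → (f m).Ext (f n) := by
  intro m n hmn
  induction n, hmn using Nat.le_induction with
  | base => exact Ext.refl _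
  | succ n hmn ih => exact ih.trans (hf n)

theorem PLe_refl {t : Set BSeq} {δ : Ordinal} {h : BSeq → BSeq} (ht : SBCT t δ) :
    PLe t δ h t δ h :=
  ⟨⟨le_rfl, fun x => ⟨fun hx => hx.1, fun hx => ⟨hx, ht.2.2.2.1 x hx⟩⟩⟩, fun _ _ => rfl⟩

theorem PLe_trans {t u v : Set BSeq} {δt δu δv : Ordinal} {h k l : BSeq → BSeq}
    (h1 : PLe u δu k t δt h) (h2 : PLe v δv l u δu k) : PLe v δv l t δt h := by
  obtain ⟨⟨hd1, he1⟩, hh1⟩ := h1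
  obtain ⟨⟨hd2, he2⟩, hh2⟩ := h2
  refine ⟨⟨hd1.trans hd2, fun x => ⟨fun hx => ?_, fun hx => ?_⟩⟩, fun x hx => ?_⟩
  · exact (he1 x).mp ⟨(he2 x).mp ⟨hx.1, hx.2.trans hd1⟩, hx.2⟩
  · have hxu := (he1 x).mpr hx
    exact ⟨((he2 x).mpr hxu.1).1, hxu.2⟩
  · have hxu := (he1 x).mpr hx
    rw [hh2 x hxu.1, hh1 x hx]

theorem PLe_chain {t : ℕ → Set BSeq} {δ : ℕ → Ordinal} {h : ℕ → BSeq → BSeq}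
    (hP : ∀ n, PCond (t n) (δ n) (h n))
    (hle : ∀ n, PLe (t (n+1)) (δ (n+1)) (h (n+1)) (t n) (δ n) (h n)) :
    ∀ {m n : ℕ}, m ≤ n → PLe (t n) (δ n) (h n) (t m) (δ m) (h m) := by
  intro m n hmn
  induction n, hmn using Nat.le_induction with
  | base => exact PLe_refl (hP m).1
  | succ n hmn ih => exact PLe_trans ih (hle n)

theorem key (t : ℕ → Set BSeq) (δ : ℕ → Ordinal) (h : ℕ → BSeq → BSeq)
    (hP : ∀ n, PCond (t n) (δ n) (h n))
    (hle : ∀ n, PLe (t (n+1)) (δ (n+1)) (h (n+1)) (t n) (δ n) (h n))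
    (hδ : ∀ n, δ n < ⨆ m, δ m)
    (B : Set BSeq) (hBc : B.Countable)
    (hBbr : ∀ b ∈ B, b.dom = (⨆ n, δ n) ∧ ∀ α < (⨆ n, δ n), b.restrict α ∈ ⋃ n, t n)
    (hBh : ∀ x ∈ ⋃ n, t n, ∃ b ∈ B, x.Ext b ∧
      ∀ n, ∀ y ∈ t n, x.Ext y → y.Ext b → ∀ m, x ∈ t m → h n y = h m x)
    (k : BSeq → BSeq)
    (hk1 : ∀ n, ∀ x ∈ t n, k x = h n x)
    (hk2 : ∀ b ∈ B, (∀ n, ∀ y ∈ t n, y.Ext b → (k y).Ext (k b)) ∧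
      ∀ s : BSeq, (∀ n, ∀ y ∈ t n, y.Ext b → (k y).Ext s) → (k b).Ext s) :
    PCond ((⋃ n, t n) ∪ B) (⨆ n, δ n) k ∧
      {x ∈ (⋃ n, t n) ∪ B | x.dom = ⨆ n, δ n} = B ∧
      ∀ n, PLe ((⋃ n, t n) ∪ B) (⨆ n, δ n) k (t n) (δ n) (h n) := by
  have chain : ∀ {m n : ℕ}, m ≤ n → PLe (t n) (δ n) (h n) (t m) (δ m) (h m) :=
    fun hmn => PLe_chain hP hle hmn
  have hsub : ∀ {m n : ℕ}, m ≤ n → t m ⊆ t n :=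
    fun hmn x hx => (((chain hmn).1.2 x).mpr hx).1
  have hag : ∀ {m n : ℕ}, m ≤ n → ∀ x ∈ t m, h n x = h m x :=
    fun hmn x hx => (chain hmn).2 x hx
  have hag2 : ∀ {m n : ℕ} {x : BSeq}, x ∈ t m → x ∈ t n → h m x = h n x := by
    intro m n x hm hn
    rw [← hag (le_max_left m n) x hm, ← hag (le_max_right m n) x hn]
  have hdomle : ∀ {n : ℕ} {x : BSeq}, x ∈ t n → x.dom ≤ δ n :=
    fun {n} _ hx => (hP n).1.2.2.2.1 _ hx
  have hdlt : ∀ {n : ℕ} {x : BSeq}, x ∈ t n → x.dom < ⨆ m, δ m :=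
    fun hx => lt_of_le_of_lt (hdomle hx) (hδ _)
  have hBdom : ∀ b ∈ B, b.dom = ⨆ n, δ n := fun b hb => (hBbr b hb).1
  have hBnotT : ∀ b ∈ B, ∀ n, b ∉ t n := by
    intro b hb n hbn
    exact absurd (hBdom b hb) (ne_of_lt (hdlt hbn))
  have hkT : ∀ {n : ℕ} {x : BSeq}, x ∈ t n → k x = h n x := fun {n x} hx => hk1 n x hx
  have hkdomT : ∀ {n : ℕ} {x : BSeq}, x ∈ t n → (k x).dom < w1 := by
    intro n x hx; rw [hkT hx]; exact (hP n).2.2.1 x hx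
  have hkmono : ∀ {m n : ℕ} {x y : BSeq}, x ∈ t m → y ∈ t n → x.Ext y → (k x).Ext (k y) := by
    intro m n x y hx hy hxy
    have hx' := hsub (le_max_left m n) hx
    have hy' := hsub (le_max_right m n) hy
    rw [hkT hx', hkT hy']
    exact (hP (max m n)).2.2.2.1 x hx' y hy' hxy
  -- value of k on a branch is bounded in length
  have hkdomB : ∀ b ∈ B, (k b).dom < w1 := by
    intro b hb
    have hYc : {y : BSeq | y ∈ (⋃ n, t n) ∧ y.Ext b}.Countable :=
      (Set.countable_iUnion fun n => (hP n).1.2.1).mono fun y hy => hy.1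
    have hYne : {y : BSeq | y ∈ (⋃ n, t n) ∧ y.Ext b}.Nonempty :=
      ⟨BSeq.nil, Set.mem_iUnion.mpr ⟨0, (hP 0).1.2.2.1⟩, BSeq.nil_ext b⟩
    obtain ⟨g, hg⟩ := hYc.exists_eq_range hYne
    have hgY : ∀ j, g j ∈ (⋃ n, t n) ∧ (g j).Ext b := by
      intro j
      have : g j ∈ {y : BSeq | y ∈ (⋃ n, t n) ∧ y.Ext b} := by rw [hg]; exact mem_range_self j
      exact this
    have hcmp : ∀ i j, (k (g i)).Ext (k (g j)) ∨ (k (g j)).Ext (k (g i)) := by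
      intro i j
      obtain ⟨ni, hni⟩ := Set.mem_iUnion.mp (hgY i).1
      obtain ⟨nj, hnj⟩ := Set.mem_iUnion.mp (hgY j).1
      rcases BSeq.ext_comparable (hgY i).2 (hgY j).2 with hc | hc
      · exact Or.inl (hkmono hni hnj hc)
      · exact Or.inr (hkmono hnj hni hc)
    set s := BSeq.chainUnion (fun j => k (g j)) with hs
    have hsd : s.dom < w1 := by
      rw [hs, BSeq.chainUnion_dom]
      refine ctble_sup_lt_w1 fun j => ?_
      obtain ⟨nj, hnj⟩ := Set.mem_iUnion.mp (hgY j).1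
      exact hkdomT hnj
    have hext : (k b).Ext s := by
      refine (hk2 b hb).2 s fun n y hy hyb => ?_
      have : y ∈ {y : BSeq | y ∈ (⋃ n, t n) ∧ y.Ext b} := ⟨Set.mem_iUnion.mpr ⟨n, hy⟩, hyb⟩
      rw [hg] at this
      obtain ⟨j, hj⟩ := this
      rw [← hj]
      exact BSeq.ext_chainUnion hcmp j
    exact lt_of_le_of_lt hext.1 hsd
  -- k is constant between x and its branch b from hBh
  have hkBx : ∀ {m : ℕ} {x b : BSeq}, x ∈ t m → b ∈ B → x.Ext b →
      (∀ n, ∀ y ∈ t n, x.Ext y → y.Ext b → ∀ m', x ∈ t m' → h n y = h m' x) → k x = k b := by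
    intro m x b hx hb hxb hconst
    refine BSeq.Ext.antisymm ((hk2 b hb).1 m x hx hxb) ?_
    refine (hk2 b hb).2 (k x) fun n y hy hyb => ?_
    rcases BSeq.ext_comparable hyb hxb with hc | hc
    · exact hkmono hy hx hc
    · rw [hkT hy, hconst n y hy hc hyb m hx, ← hkT hx]
      exact BSeq.Ext.refl _
  -- SBCT of the union
  have hsbct : SBCT ((⋃ n, t n) ∪ B) (⨆ n, δ n) := by
    refine ⟨ctble_sup_lt_w1 fun n => (hP n).1.1,
      (Set.countable_iUnion fun n => (hP n).1.2.1).union hBc,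
      Or.inl (Set.mem_iUnion.mpr ⟨0, (hP 0).1.2.2.1⟩), ?_, ?_, ?_, ?_⟩
    · rintro x (hx | hx)
      · obtain ⟨n, hn⟩ := Set.mem_iUnion.mp hx
        exact (hdomle hn).trans (le_of_lt (hδ n))
      · exact le_of_eq (hBdom x hx)
    · rintro x (hx | hx) α
      · obtain ⟨n, hn⟩ := Set.mem_iUnion.mp hx
        exact Or.inl (Set.mem_iUnion.mpr ⟨n, (hP n).1.2.2.2.2.1 x hn α⟩)
      · rcases lt_or_ge α (⨆ n, δ n) with hα | hα
        · exact Or.inl ((hBbr x hx).2 α hα)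
        · rw [BSeq.restrict_eq_self ((hBdom x hx).symm ▸ hα : x.dom ≤ α)]
          exact Or.inr hx
    · rintro x (hx | hx) hxd i
      · obtain ⟨n, hn⟩ := Set.mem_iUnion.mp hx
        obtain ⟨m, hm⟩ := Ordinal.lt_iSup_iff.mp hxd
        have hx' : x ∈ t (max n m) := hsub (le_max_left n m) hn
        have hxd' : x.dom < δ (max n m) :=
          lt_of_lt_of_le hm ((chain (le_max_right n m)).1.1)
        obtain ⟨z, hz, hzp⟩ := (hP (max n m)).1.2.2.2.2.2.1 x hx' hxd' i
        exact ⟨z, Or.inl (Set.mem_iUnion.mpr ⟨max n m, hz⟩), hzp⟩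
      · exact absurd hxd (by rw [hBdom x hx]; exact lt_irrefl _)
    · rintro x (hx | hx)
      · obtain ⟨b, hb, hxb, _⟩ := hBh x hx
        exact ⟨b, Or.inr hb, hBdom b hb, hxb⟩
      · exact ⟨x, Or.inr hx, hBdom x hx, BSeq.Ext.refl x⟩
  refine ⟨⟨hsbct, ?_, ?_, ?_, ?_, ?_⟩, ?_, ?_⟩
  · rw [hkT ((hP 0).1.2.2.1 : BSeq.nil ∈ t 0)]
    exact (hP 0).2.1
  · rintro x (hx | hx)
    · obtain ⟨n, hn⟩ := Set.mem_iUnion.mp hx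
      exact hkdomT hn
    · exact hkdomB x hx
  · rintro x (hx | hx) y (hy | hy) hxy
    · obtain ⟨n, hn⟩ := Set.mem_iUnion.mp hx
      obtain ⟨m, hm⟩ := Set.mem_iUnion.mp hy
      exact hkmono hn hm hxy
    · obtain ⟨n, hn⟩ := Set.mem_iUnion.mp hx
      exact (hk2 y hy).1 n x hn hxy
    · obtain ⟨m, hm⟩ := Set.mem_iUnion.mp hy
      exact absurd (lt_of_le_of_lt (hxy.1.trans (hdomle hm)) (hδ m))
        (by rw [hBdom x hx]; exact lt_irrefl _)
    · have : x = y := hxy.eq_of_dom_le (le_of_eq ((hBdom y hy).trans (hBdom x hx).symm))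
      rw [this]
      exact BSeq.Ext.refl _
  · rintro z (hz | hz) hlim s hsb
    · obtain ⟨n, hn⟩ := Set.mem_iUnion.mp hz
      rw [hkT hn]
      refine (hP n).2.2.2.2.1 z hn hlim s fun y hy hyz hne => ?_
      rw [← hkT hy]
      exact hsb y (Or.inl (Set.mem_iUnion.mpr ⟨n, hy⟩)) hyz hne
    · refine (hk2 z hz).2 s fun n y hy hyz => ?_
      refine hsb y (Or.inl (Set.mem_iUnion.mpr ⟨n, hy⟩)) hyz fun hyeq => ?_
      exact hBnotT z hz n (hyeq ▸ hy)
  · rintro x (hx | hx)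
    · obtain ⟨n, hn⟩ := Set.mem_iUnion.mp hx
      obtain ⟨b, hb, hxb, hconst⟩ := hBh x hx
      exact ⟨b, Or.inr hb, hBdom b hb, hxb, hkBx hn hb hxb hconst⟩
    · exact ⟨x, Or.inr hx, hBdom x hx, BSeq.Ext.refl x, rfl⟩
  · ext x
    simp only [Set.mem_setOf_eq, Set.mem_union]
    constructor
    · rintro ⟨hx | hx, hxd⟩
      · obtain ⟨n, hn⟩ := Set.mem_iUnion.mp hx
        exact absurd hxd (ne_of_lt (hdlt hn))
      · exact hx
    · intro hx
      exact ⟨Or.inr hx, hBdom x hx⟩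
  · intro n
    refine ⟨⟨le_of_lt (hδ n), fun x => ⟨?_, fun hx => ⟨Or.inl (Set.mem_iUnion.mpr ⟨n, hx⟩), hdomle hx⟩⟩⟩, fun x hx => hkT hx⟩
    rintro ⟨hx | hx, hxd⟩
    · obtain ⟨m, hm⟩ := Set.mem_iUnion.mp hx
      rcases le_total m n with hmn | hmn
      · exact hsub hmn hm
      · exact ((chain hmn).1.2 x).mp ⟨hm, hxd⟩
    · exact absurd ((hBdom x hx).symm.trans_le hxd) (not_le.mpr (hδ n))

theorem construct (t : ℕ → Set BSeq) (δ : ℕ → Ordinal) (h : ℕ → BSeq → BSeq)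
    (hP : ∀ n, PCond (t n) (δ n) (h n))
    (hle : ∀ n, PLe (t (n+1)) (δ (n+1)) (h (n+1)) (t n) (δ n) (h n))
    (hδ : ∀ n, δ n < ⨆ m, δ m) :
    ∃ (u : Set BSeq) (δu : Ordinal) (ku : BSeq → BSeq),
      PCond u δu ku ∧ ∀ n, PLe u δu ku (t n) (δ n) (h n) := by
  classical
  have chain : ∀ {m n : ℕ}, m ≤ n → PLe (t n) (δ n) (h n) (t m) (δ m) (h m) :=
    fun hmn => PLe_chain hP hle hmn
  have hsub : ∀ {m n : ℕ}, m ≤ n → t m ⊆ t n :=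
    fun hmn x hx => (((chain hmn).1.2 x).mpr hx).1
  have hag : ∀ {m n : ℕ}, m ≤ n → ∀ x ∈ t m, h n x = h m x :=
    fun hmn x hx => (chain hmn).2 x hx
  have hag2 : ∀ {m n : ℕ} {x : BSeq}, x ∈ t m → x ∈ t n → h m x = h n x := by
    intro m n x hm hn
    rw [← hag (le_max_left m n) x hm, ← hag (le_max_right m n) x hn]
  have hdomle : ∀ {n : ℕ} {x : BSeq}, x ∈ t n → x.dom ≤ δ n :=
    fun {n} _ hx => (hP n).1.2.2.2.1 _ hx
  have hδmono : ∀ {m n : ℕ}, m ≤ n → δ m ≤ δ n := fun hmn => (chain hmn).1.1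
  -- fusion: a branch through any node on which h is eventually constant
  have hbranch : ∀ (n : ℕ) (x : BSeq), x ∈ t n → ∃ b : BSeq,
      (b.dom = ⨆ m, δ m) ∧ (∀ α < ⨆ m, δ m, b.restrict α ∈ ⋃ m, t m) ∧ x.Ext b ∧
      (∀ n', ∀ y ∈ t n', x.Ext y → y.Ext b → ∀ m, x ∈ t m → h n' y = h m x) := by
    intro n x hx
    have hstep : ∀ (m : ℕ) (z : BSeq), z ∈ t m →
        ∃ w, w ∈ t m ∧ w.dom = δ m ∧ z.Ext w ∧ h m z = h m w := by
      intro m z hz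
      obtain ⟨w, hw, h1, h2, h3⟩ := (hP m).2.2.2.2.2 z hz
      exact ⟨w, hw, h1, h2, h3⟩
    choose F hF1 hF2 hF3 hF4 using hstep
    let Y : (i : ℕ) → {z : BSeq // z ∈ t (n + i)} := fun i =>
      Nat.rec (motive := fun i => {z : BSeq // z ∈ t (n + i)})
        ⟨F n x hx, hF1 n x hx⟩
        (fun i p => ⟨F (n + i + 1) p.1 (hsub (Nat.le_succ (n + i)) p.2),
          hF1 (n + i + 1) p.1 (hsub (Nat.le_succ (n + i)) p.2)⟩) i
    have hYdom : ∀ i, (Y i).1.dom = δ (n + i) := by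
      intro i
      cases i with
      | zero => exact hF2 n x hx
      | succ i => exact hF2 (n + i + 1) (Y i).1 (hsub (Nat.le_succ (n + i)) (Y i).2)
    have hYext : ∀ i, (Y i).1.Ext (Y (i+1)).1 := by
      intro i
      exact hF3 (n + i + 1) (Y i).1 (hsub (Nat.le_succ (n + i)) (Y i).2)
    have hxY : ∀ i, x.Ext (Y i).1 := by
      intro i
      induction i with
      | zero => exact hF3 n x hx
      | succ i ih => exact ih.trans (hYext i)
    have hYh : ∀ i, h (n + i) (Y i).1 = h n x := by
      intro i
      induction i with
      | zero => exact (hF4 n x hx).symm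
      | succ i ih =>
        have h1 : h (n+i+1) ((Y (i+1)).1) = h (n+i+1) ((Y i).1) :=
          (hF4 (n + i + 1) (Y i).1 (hsub (Nat.le_succ (n + i)) (Y i).2)).symm
        have h2 : h (n+i+1) ((Y i).1) = h (n+i) ((Y i).1) := hag (Nat.le_succ _) _ (Y i).2
        exact h1.trans (h2.trans ih)
    have hYmono : ∀ {i j : ℕ}, i ≤ j → (Y i).1.Ext (Y j).1 :=
      fun hij => BSeq.ext_mono hYext hij
    have hYcmp : ∀ i j, ((Y i).1).Ext ((Y j).1) ∨ ((Y j).1).Ext ((Y i).1) := by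
      intro i j
      rcases le_total i j with hij | hij
      · exact Or.inl (hYmono hij)
      · exact Or.inr (hYmono hij)
    set b := BSeq.chainUnion (fun i => (Y i).1) with hbdef
    have hYb : ∀ i, (Y i).1.Ext b := fun i => BSeq.ext_chainUnion hYcmp i
    have hbdom : b.dom = ⨆ m, δ m := by
      rw [hbdef, BSeq.chainUnion_dom]
      apply le_antisymm
      · refine Ordinal.iSup_le fun i => ?_
        rw [hYdom i]
        exact Ordinal.le_iSup δ (n + i)
      · refine Ordinal.iSup_le fun m => ?_
        refine (hδmono (Nat.le_add_left m n)).trans ?_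
        rw [← hYdom m]
        exact Ordinal.le_iSup (fun i => (Y i).1.dom) m
    refine ⟨b, hbdom, ?_, (hxY 0).trans (hYb 0), ?_⟩
    · intro α hα
      have hα' : α < ⨆ i, (Y i).1.dom := by
        rw [← BSeq.chainUnion_dom, ← hbdef, hbdom]
        exact hα
      obtain ⟨i, hi⟩ := Ordinal.lt_iSup_iff.mp hα'
      rw [BSeq.restrict_of_ext (hYb i) (le_of_lt hi)]
      exact Set.mem_iUnion.mpr ⟨n + i, (hP (n+i)).1.2.2.2.2.1 (Y i).1 (Y i).2 α⟩
    · intro n' y hy hxy hyb m hxm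
      have hmx : h m x = h n x := hag2 hxm hx
      have hdy : y.dom ≤ (Y n').1.dom := by
        rw [hYdom n']
        exact (hdomle hy).trans (hδmono (Nat.le_add_left n' n))
      have hyY : y.Ext (Y n').1 := BSeq.ext_of_ext_of_dom_le hyb (hYb n') hdy
      set p := max n' (n + n') with hp
      have hyp : y ∈ t p := hsub (le_max_left _ _) hy
      have hYp : (Y n').1 ∈ t p := hsub (le_max_right _ _) (Y n').2
      have hxp : x ∈ t p := hsub ((Nat.le_add_right n n').trans (le_max_right _ _)) hx
      have h1 : (h p y).Ext (h p (Y n').1) := (hP p).2.2.2.1 y hyp _ hYp hyY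
      have h2 : (h p x).Ext (h p y) := (hP p).2.2.2.1 x hxp y hyp hxy
      have h3 : h p (Y n').1 = h p x := by
        rw [hag (le_max_right n' (n + n')) _ (Y n').2, hYh n']
        exact hag2 hx hxp
      have h4 : h p y = h p x := BSeq.Ext.antisymm (h3 ▸ h1) h2
      calc h n' y = h p y := (hag (le_max_left _ _) y hy).symm
        _ = h p x := h4
        _ = h n x := hag2 hxp hx
        _ = h m x := hmx.symm
  -- enumerate the union tree and attach a branch to each node
  have hTc : (⋃ n, t n).Countable := Set.countable_iUnion fun n => (hP n).1.2.1
  have hTne : (⋃ n, t n).Nonempty := ⟨BSeq.nil, Set.mem_iUnion.mpr ⟨0, (hP 0).1.2.2.1⟩⟩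
  obtain ⟨e, he⟩ := hTc.exists_eq_range hTne
  have hbr : ∀ j : ℕ, ∃ b : BSeq,
      (b.dom = ⨆ m, δ m) ∧ (∀ α < ⨆ m, δ m, b.restrict α ∈ ⋃ m, t m) ∧ (e j).Ext b ∧
      (∀ n', ∀ y ∈ t n', (e j).Ext y → y.Ext b → ∀ m, (e j) ∈ t m → h n' y = h m (e j)) := by
    intro j
    have hj : e j ∈ ⋃ n, t n := by rw [he]; exact Set.mem_range_self j
    obtain ⟨n, hn⟩ := Set.mem_iUnion.mp hj
    exact hbranch n (e j) hn
  choose bb hbb1 hbb2 hbb3 hbb4 using hbr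
  -- the labeling
  have hYex : ∀ z : BSeq, ∃ g : ℕ → BSeq,
      {y : BSeq | y ∈ (⋃ n, t n) ∧ y.Ext z} = Set.range g := by
    intro z
    exact (hTc.mono fun y hy => hy.1).exists_eq_range
      ⟨BSeq.nil, Set.mem_iUnion.mpr ⟨0, (hP 0).1.2.2.1⟩, BSeq.nil_ext z⟩
  choose G hG using hYex
  let kT : BSeq → BSeq := fun z => if hz : ∃ n, z ∈ t n then h hz.choose z else BSeq.nil
  have hkTeq : ∀ n z, z ∈ t n → kT z = h n z := by
    intro n z hz
    have hex : ∃ n, z ∈ t n := ⟨n, hz⟩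
    simp only [kT, dif_pos hex]
    exact hag2 hex.choose_spec hz
  let k : BSeq → BSeq := fun z =>
    if hz : ∃ n, z ∈ t n then h hz.choose z
    else BSeq.chainUnion (fun j => kT (G z j))
  have hkeq : ∀ n z, z ∈ t n → k z = h n z := by
    intro n z hz
    have hex : ∃ n, z ∈ t n := ⟨n, hz⟩
    simp only [k, dif_pos hex]
    exact hag2 hex.choose_spec hz
  have hkTmono : ∀ {m n : ℕ} {y y' : BSeq}, y ∈ t m → y' ∈ t n → y.Ext y' →
      (kT y).Ext (kT y') := by
    intro m n y y' hy hy' hyy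
    have hy2 := hsub (le_max_left m n) hy
    have hy2' := hsub (le_max_right m n) hy'
    rw [hkTeq _ _ hy2, hkTeq _ _ hy2']
    exact (hP (max m n)).2.2.2.1 y hy2 y' hy2' hyy
  have hGY : ∀ z j, G z j ∈ (⋃ n, t n) ∧ (G z j).Ext z := by
    intro z j
    have : G z j ∈ {y : BSeq | y ∈ (⋃ n, t n) ∧ y.Ext z} := by
      rw [hG z]; exact Set.mem_range_self j
    exact this
  have hGcmp : ∀ z i j, (kT (G z i)).Ext (kT (G z j)) ∨ (kT (G z j)).Ext (kT (G z i)) := by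
    intro z i j
    obtain ⟨ni, hni⟩ := Set.mem_iUnion.mp (hGY z i).1
    obtain ⟨nj, hnj⟩ := Set.mem_iUnion.mp (hGY z j).1
    rcases BSeq.ext_comparable (hGY z i).2 (hGY z j).2 with hc | hc
    · exact Or.inl (hkTmono hni hnj hc)
    · exact Or.inr (hkTmono hnj hni hc)
  have hBnotT : ∀ j : ℕ, ¬ ∃ n, bb j ∈ t n := by
    rintro j ⟨n, hn⟩
    have := hdomle hn
    rw [hbb1 j] at this
    exact absurd (lt_of_le_of_lt this (hδ n)) (lt_irrefl _)
  have hkb : ∀ j : ℕ, k (bb j) = BSeq.chainUnion (fun i => kT (G (bb j) i)) := by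
    intro j
    simp only [k, dif_neg (hBnotT j)]
  -- apply the key lemma
  have hkey := key t δ h hP hle hδ (Set.range bb) (Set.countable_range bb) ?_ ?_ k ?_ ?_
  · exact ⟨_, _, k, hkey.1, hkey.2.2⟩
  · rintro b ⟨j, rfl⟩
    exact ⟨hbb1 j, hbb2 j⟩
  · intro x hx
    have : x ∈ Set.range e := by rw [← he]; exact hx
    obtain ⟨j, rfl⟩ := this
    exact ⟨bb j, Set.mem_range_self j, hbb3 j, hbb4 j⟩
  · exact fun n x hx => hkeq n x hx
  · rintro b ⟨j, rfl⟩
    constructor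
    · intro n y hy hyb
      have hyY : y ∈ {y : BSeq | y ∈ (⋃ n, t n) ∧ y.Ext (bb j)} :=
        ⟨Set.mem_iUnion.mpr ⟨n, hy⟩, hyb⟩
      rw [hG (bb j)] at hyY
      obtain ⟨i, hi⟩ := hyY
      rw [hkb j, hkeq n y hy, ← hkTeq n y hy, ← hi]
      exact BSeq.ext_chainUnion (hGcmp (bb j)) i
    · intro s hs
      rw [hkb j]
      refine BSeq.chainUnion_ext fun i => ?_
      obtain ⟨n, hn⟩ := Set.mem_iUnion.mp (hGY (bb j) i).1
      rw [hkTeq n _ hn, ← hkeq n _ hn]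
      exact hs n (G (bb j) i) hn (hGY (bb j) i).2


/-- the canonical lower bound of a strictly decreasing
ω-sequence of conditions of `P` (union tree plus a suitable countable set `B`
of cofinal branches, with the labeling extended by unions along branches) is a
condition with top level `sup δ_n` and top level set `B`, below every
condition of the sequence.  In particular `P` is σ-closed. -/
theorem stmt9 (t : ℕ → Set BSeq) (δ : ℕ → Ordinal) (h : ℕ → BSeq → BSeq)
    (hP : ∀ n, PCond (t n) (δ n) (h n))
    (hle : ∀ n, PLe (t (n+1)) (δ (n+1)) (h (n+1)) (t n) (δ n) (h n))
    (hne : ∀ n, t (n+1) ≠ t n)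
    (B : Set BSeq) (hBc : B.Countable)
    (hBbr : ∀ b ∈ B, b.dom = (⨆ n, δ n) ∧ ∀ α < (⨆ n, δ n), b.restrict α ∈ ⋃ n, t n)
    (hBh : ∀ x ∈ ⋃ n, t n, ∃ b ∈ B, x.Ext b ∧
      ∀ n, ∀ y ∈ t n, x.Ext y → y.Ext b → ∀ m, x ∈ t m → h n y = h m x)
    (k : BSeq → BSeq)
    (hk1 : ∀ n, ∀ x ∈ t n, k x = h n x)
    (hk2 : ∀ b ∈ B, (∀ n, ∀ y ∈ t n, y.Ext b → (k y).Ext (k b)) ∧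
      ∀ s : BSeq, (∀ n, ∀ y ∈ t n, y.Ext b → (k y).Ext s) → (k b).Ext s) :
    (PCond ((⋃ n, t n) ∪ B) (⨆ n, δ n) k ∧
      {x ∈ (⋃ n, t n) ∪ B | x.dom = ⨆ n, δ n} = B ∧
      ∀ n, PLe ((⋃ n, t n) ∪ B) (⨆ n, δ n) k (t n) (δ n) (h n)) ∧
    (∀ (t' : ℕ → Set BSeq) (δ' : ℕ → Ordinal) (h' : ℕ → BSeq → BSeq),
      (∀ n, PCond (t' n) (δ' n) (h' n)) →
      (∀ n, PLe (t' (n+1)) (δ' (n+1)) (h' (n+1)) (t' n) (δ' n) (h' n)) →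
      ∃ (u : Set BSeq) (δu : Ordinal) (ku : BSeq → BSeq),
        PCond u δu ku ∧ ∀ n, PLe u δu ku (t' n) (δ' n) (h' n)) := by
  constructor
  · -- the given data is a lower bound
    have hδ : ∀ n, δ n < ⨆ m, δ m := by
      intro n
      have h1 : δ n ≤ δ (n+1) := (hle n).1.1
      have h2 : δ n ≠ δ (n+1) := by
        intro heq
        refine hne n (Set.eq_of_subset_of_subset (fun x hx => ?_) (fun x hx => ?_))
        · refine ((hle n).1.2 x).mp ⟨hx, ?_⟩
          rw [heq]
          exact (hP (n+1)).1.2.2.2.1 x hx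
        · exact (((hle n).1.2 x).mpr hx).1
      exact lt_of_lt_of_le (lt_of_le_of_ne h1 h2) (Ordinal.le_iSup δ (n+1))
    exact key t δ h hP hle hδ B hBc hBbr hBh k hk1 hk2
  · -- σ-closedness
    intro t' δ' h' hP' hle'
    have chain : ∀ {m n : ℕ}, m ≤ n → PLe (t' n) (δ' n) (h' n) (t' m) (δ' m) (h' m) :=
      fun hmn => PLe_chain hP' hle' hmn
    by_cases hst : ∃ n, ∀ m, δ' (n + m) = δ' n
    · -- eventually constant: the sequence stabilizes
      obtain ⟨n₀, hn₀⟩ := hst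
      refine ⟨t' n₀, δ' n₀, h' n₀, hP' n₀, fun m => ?_⟩
      rcases le_total m n₀ with hm | hm
      · exact chain hm
      · have hδeq : δ' m = δ' n₀ := by
          have := hn₀ (m - n₀)
          rwa [Nat.add_sub_cancel' hm] at this
        have hc := chain hm
        have hteq : t' m = t' n₀ := by
          refine Set.eq_of_subset_of_subset (fun x hx => ?_) (fun x hx => ?_)
          · refine (hc.1.2 x).mp ⟨hx, ?_⟩
            rw [← hδeq]
            exact (hP' m).1.2.2.2.1 x hx
          · exact ((hc.1.2 x).mpr hx).1
        refine ⟨⟨le_of_eq hδeq, fun x => ⟨fun hx => hteq ▸ hx.1,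
          fun hx => ⟨hteq ▸ hx, (hP' m).1.2.2.2.1 x hx⟩⟩⟩, fun x hx => ?_⟩
        exact (hc.2 x (hteq ▸ hx)).symm
    · -- tops unbounded: use the fusion construction
      push_neg at hst
      have hδ : ∀ n, δ' n < ⨆ m, δ' m := by
        intro n
        obtain ⟨m, hm⟩ := hst n
        have h1 : δ' n ≤ δ' (n + m) := (chain (Nat.le_add_right n m)).1.1
        exact lt_of_lt_of_le (lt_of_le_of_ne h1 (Ne.symm hm)) (Ordinal.le_iSup δ' (n+m))
      exact construct t' δ' h' hP' hle' hδ
end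
end

section
/- Suppose T is a Kurepa tree and F : [T] → 2^{ω₁} is continuous (with respect to the cone topologies). If 2^ω > ω₁, then F is not surjective. Consequently, the existence of a strong Kurepa tree implies CH. -/
noncomputable section

section Aux

open Classical in
/-- Value function coding a real `f : ℕ → Bool` on the natural-number ordinals. -/
def natVal (f : ℕ → Bool) (o : Ordinal.{0}) : Bool :=
  if h : ∃ n : ℕ, (n : Ordinal) = o then f h.choose else false

lemma natVal_nat (f : ℕ → Bool) (n : ℕ) : natVal f n = f n := by
  have h : ∃ m : ℕ, (m : Ordinal.{0}) = (n : Ordinal.{0}) := ⟨n, rfl⟩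
  have he : h.choose = n := Nat.cast_injective h.choose_spec
  simp [natVal, dif_pos h, he]

lemma natVal_ge (f : ℕ → Bool) {o : Ordinal.{0}} (ho : Ordinal.omega0 ≤ o) :
    natVal f o = false := by
  rw [natVal, dif_neg]
  rintro ⟨n, hn⟩
  exact absurd (hn ▸ Ordinal.nat_lt_omega0 n) (not_lt.mpr ho)

/-- Every open set in the cone topology contains, around any of its points `b`,
a basic cone centered at a node of `b`. -/
lemma cone_basis {T : Type} [PartialOrder T] {ht : T → Ordinal}
    {S : Set (Branches ht)} (hS : (coneTop ht).IsOpen S) {b : Branches ht}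
    (hb : b ∈ S) : ∃ x ∈ b.1, ∀ c : Branches ht, x ∈ c.1 → c ∈ S := by
  induction hS with
  | basic S hS =>
    obtain ⟨x, rfl⟩ := hS
    exact ⟨x, hb, fun c hc => hc⟩
  | univ =>
    obtain ⟨x, hx, -⟩ := b.2.2.2 0 (lt_of_le_of_lt zero_le omega0_lt_w1)
    exact ⟨x, hx, fun c _ => trivial⟩
  | inter S₁ S₂ h1 h2 ih1 ih2 =>
    obtain ⟨x₁, hx₁, H₁⟩ := ih1 hb.1
    obtain ⟨x₂, hx₂, H₂⟩ := ih2 hb.2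
    have hle : x₁ ≤ x₂ ∨ x₂ ≤ x₁ := by
      rcases eq_or_ne x₁ x₂ with h | h
      · exact Or.inl h.le
      · exact b.2.1 hx₁ hx₂ h
    have key : ∀ {u v : T}, u ≤ v → ∀ c : Branches ht, v ∈ c.1 → u ∈ c.1 := by
      intro u v huv c hvc
      rcases lt_or_eq_of_le huv with h | h
      · exact c.2.2.1 v hvc u h
      · exact h ▸ hvc
    rcases hle with h | h
    · exact ⟨x₂, hx₂, fun c hc => ⟨H₁ c (key h c hc), H₂ c hc⟩⟩
    · exact ⟨x₁, hx₁, fun c hc => ⟨H₁ c hc, H₂ c (key h c hc)⟩⟩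
  | sUnion 𝒮 hs ih =>
    obtain ⟨S₀, hS₀, hbS₀⟩ := hb
    obtain ⟨x, hx, H⟩ := ih S₀ hS₀ hbS₀
    exact ⟨x, hx, fun c hc => ⟨S₀, hS₀, H c hc⟩⟩

/-- A tree of height ω₁ with countable levels has at most ℵ₁ nodes. -/
lemma mk_tree_le {T : Type} [PartialOrder T] {ht : T → Ordinal}
    (htree : ∀ x : T, ht x < w1) (hcount : ∀ α : Ordinal, {x : T | ht x = α}.Countable) :
    Cardinal.mk T ≤ Cardinal.aleph 1 := by
  choose f hf using fun α => Set.countable_iff_exists_injective.mp (hcount α)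
  let e := Ordinal.ToType.mk (o := w1)
  let G : T → w1.ToType × ℕ := fun x => (e ⟨ht x, htree x⟩, f (ht x) ⟨x, rfl⟩)
  have hG : Function.Injective G := by
    intro x y hxy
    have h1 : ht x = ht y := by
      have := congrArg Prod.fst hxy
      simpa [G, e.injective.eq_iff, Subtype.ext_iff] using this
    have key : ∀ β (hβ : ht y = β) (z : {z : T // ht z = β}),
        z = ⟨y, hβ⟩ → f β z = f (ht y) ⟨y, rfl⟩ := by
      intro β hβ z hz
      subst hβ
      rw [hz]
    have h2 : f (ht x) ⟨y, h1.symm⟩ = f (ht x) ⟨x, rfl⟩ := by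
      rw [key (ht x) h1.symm ⟨y, h1.symm⟩ rfl]
      exact (congrArg Prod.snd hxy).symm
    have := hf (ht x) h2
    exact (congrArg Subtype.val this).symm
  calc Cardinal.mk T ≤ Cardinal.mk (w1.ToType × ℕ) := Cardinal.mk_le_of_injective hG
    _ = Cardinal.aleph 1 * Cardinal.aleph0 := by
        simp [Cardinal.mk_toType, w1, Cardinal.card_ord]
    _ = Cardinal.aleph 1 := Cardinal.mul_eq_left (Cardinal.aleph0_le_aleph 1)
        (Cardinal.aleph0_le_aleph 1) Cardinal.aleph0_ne_zero

/-- The key inequality, lifted to an arbitrary universe. -/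
lemma lift_key (h : 2 ^ Cardinal.aleph.{0} 0 ≤ Cardinal.aleph.{0} 1) :
    2 ^ Cardinal.aleph.{u} 0 ≤ Cardinal.aleph.{u} 1 := by
  have := Cardinal.lift_le.{u}.mpr h
  simpa [Cardinal.lift_power] using this

/-- The core argument: a surjective continuous `F` forces `2^ℵ₀ ≤ ℵ₁`. -/
lemma key_lemma {T : Type} [PartialOrder T] (ht : T → Ordinal)
    (htree : ∀ x : T, ht x < w1)
    (hcount : ∀ α : Ordinal, {x : T | ht x = α}.Countable)
    (F : Branches ht → FullSeq)
    (hcont : @Continuous _ _ (coneTop ht) seqTop F)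
    (hsurj : Function.Surjective F) :
    2 ^ Cardinal.aleph.{0} 0 ≤ Cardinal.aleph.{0} 1 := by
  set sF : (ℕ → Bool) → BSeq := fun f =>
    ⟨Ordinal.omega0, natVal f, fun i hi => natVal_ge f hi⟩ with hsF
  set gF : (ℕ → Bool) → FullSeq := fun f =>
    ⟨⟨w1, natVal f, fun i hi => natVal_ge f (le_trans omega0_lt_w1.le hi)⟩, rfl⟩ with hgF
  set U : (ℕ → Bool) → Set FullSeq := fun f => {g : FullSeq | (sF f).Ext g.1} with hU
  have hUopen : ∀ f, seqTop.IsOpen (U f) :=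
    fun f => TopologicalSpace.GenerateOpen.basic _ ⟨sF f, omega0_lt_w1, rfl⟩
  have hpre : ∀ f, (coneTop ht).IsOpen (F ⁻¹' U f) :=
    fun f => @Continuous.isOpen_preimage _ _ (coneTop ht) seqTop F hcont _ (hUopen f)
  have hmem : ∀ f, (hsurj (gF f)).choose ∈ F ⁻¹' U f := by
    intro f
    show (sF f).Ext (F (hsurj (gF f)).choose).1
    rw [(hsurj (gF f)).choose_spec]
    exact ⟨omega0_lt_w1.le, fun i _ => rfl⟩
  choose x hx hcone using fun f => cone_basis (hpre f) (hmem f)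
  have hinj : Function.Injective x := by
    intro f f' hxy
    have h1 : (hsurj (gF f)).choose ∈ F ⁻¹' U f' := by
      apply hcone f'
      rw [← hxy]; exact hx f
    have h2 : (sF f').Ext (gF f).1 := by
      rwa [Set.mem_preimage, (hsurj (gF f)).choose_spec] at h1
    funext n
    have := h2.2 n (Ordinal.nat_lt_omega0 n)
    simp only [hsF, hgF] at this
    rw [natVal_nat, natVal_nat] at this
    exact this.symm
  calc (2 : Cardinal) ^ Cardinal.aleph 0 = Cardinal.mk (ℕ → Bool) := by
        rw [Cardinal.aleph_zero, ← Cardinal.mk_bool, ← Cardinal.mk_nat, Cardinal.power_def]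
    _ ≤ Cardinal.mk T := Cardinal.mk_le_of_injective hinj
    _ ≤ Cardinal.aleph 1 := mk_tree_le htree hcount

end Aux

/-- for a Kurepa tree `T` and a continuous
`F : [T] → 2^{ω₁}` (cone topologies): if `2^ω > ω₁` then `F` is not
surjective; consequently, if `F` is surjective (i.e. `T` is a strong Kurepa
tree) then CH holds. -/
theorem stmt12 {T : Type} [PartialOrder T] (ht : T → Ordinal) (htree : IsTreeW1 ht)
    (hcount : ∀ α : Ordinal, {x : T | ht x = α}.Countable)
    (hkurepa : Cardinal.aleph 2 ≤ Cardinal.mk (Branches ht))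
    (F : Branches ht → FullSeq)
    (hcont : @Continuous _ _ (coneTop ht) seqTop F) :
    (Cardinal.aleph 1 < 2 ^ Cardinal.aleph 0 → ¬ Function.Surjective F) ∧
    (Function.Surjective F → 2 ^ Cardinal.aleph 0 = Cardinal.aleph 1) := by
  constructor
  · intro hlt hsurj
    exact absurd hlt (not_lt.mpr (lift_key (key_lemma ht htree.ht_lt hcount F hcont hsurj)))
  · intro hsurj
    refine le_antisymm (lift_key (key_lemma ht htree.ht_lt hcount F hcont hsurj)) ?_
    have h := Cardinal.aleph_one_le_continuum
    rwa [show Cardinal.continuum = 2 ^ Cardinal.aleph 0 by simp [Cardinal.aleph_zero]] at h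
end
end
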